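/- arXiv:1108.5437 — 3 statements merged into one kernel-verified Lean document; each statement's English description precedes it below -/
import Mathlib

section
/- Assume hypothesis (*). Set U_j = Σ_{ℓ>j} R_ℓ, so that R′_1(z) = (z−1)^{−1}(R′(z) − R′(1)) = Σ_{j=0}^{k−1} U_j z^j, and R̃′(z) = R′_1(z) − R′_1(1). Then: (a) for every r ∈ [0,1] there is C = C(r) > 0 (independent of k, a, b) such that ‖R′_1(e^{a+ib}) − R′_1(e^{ib})‖ ≤ C a^r S_r(k,a) for all a > 0, b ∈ [0,2π], k ≥ 1; (b) there is C′ > 0 (depending only on Σ_j ‖U_j‖) such that ‖R′_1(z)‖ ≤ C′ (1 + a^r S_r(k,a)) for all r ∈ [0,1], a > 0, k ≥ 1 and all z with |z| ≤ e^a; (c) for every r ∈ [0,1] and every ε > 0 there exist δ > 0 and k₀ ≥ 1 such that ‖R̃′(z)‖ ≤ ε + C a^r S_r(k,a) for all k ≥ k₀, all a > 0, and all z ∈ D_a ∩ B_δ(1), where C = C(r) is the constant from (a). -/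
noncomputable section

open MeasureTheory Filter Set Metric
open scoped Topology ENNReal NNReal

variable {B : Type} [NormedAddCommGroup B] [NormedSpace ℂ B] [CompleteSpace B]

/-- `R(z) = ∑_{n≥1} Rₙ zⁿ` (here `R₀ = 0` is assumed throughout). -/
def Rcal (Rn : ℕ → B →L[ℂ] B) (z : ℂ) : B →L[ℂ] B :=
  ∑' n : ℕ, z ^ n • Rn n

/-- tail sum `U_j = ∑_{ℓ>j} R_ℓ`. -/
def Utail (Rn : ℕ → B →L[ℂ] B) (j : ℕ) : B →L[ℂ] B :=
  ∑' ℓ : ℕ, Rn (j + 1 + ℓ)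

/-- the truncated operators `R'_n` corresponding to `φ' = min (φ, k)`:
`R'_n = R_n` for `n < k`, `R'_k = ∑_{j≥k} R_j`, and `R'_n = 0` for `n > k`. -/
def Rntr (Rn : ℕ → B →L[ℂ] B) (k n : ℕ) : B →L[ℂ] B :=
  if n < k then Rn n else if n = k then ∑' ℓ : ℕ, Rn (k + ℓ) else 0

/-- the truncated series `R'(z) = ∑_{n=1}^{k} zⁿ R'_n`. -/
def Rcaltr (Rn : ℕ → B →L[ℂ] B) (k : ℕ) (z : ℂ) : B →L[ℂ] B :=
  ∑ n ∈ Finset.range (k + 1), z ^ n • Rntr Rn k n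

/-- `S_q(k,a) = ∑_{j=1}^{k} (∑_{ℓ>j} ‖R_ℓ‖) j^q e^{j a}`. -/
def Sq (Rn : ℕ → B →L[ℂ] B) (q : ℝ) (k : ℕ) (a : ℝ) : ℝ :=
  ∑ j ∈ Finset.Icc 1 k, (∑' ℓ : ℕ, ‖Rn (j + 1 + ℓ)‖) * (j : ℝ) ^ q * Real.exp ((j : ℝ) * a)

/-- `R'_1(z) = (z-1)⁻¹ (R'(z) - R'(1)) = ∑_{j=0}^{k-1} U_j z^j`. -/
def R1tr (Rn : ℕ → B →L[ℂ] B) (k : ℕ) (z : ℂ) : B →L[ℂ] B :=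
  ∑ j ∈ Finset.range k, z ^ j • Utail Rn j

/-- `R̃'(z) = R'_1(z) - R'_1(1)`. -/
def Rttr (Rn : ℕ → B →L[ℂ] B) (k : ℕ) (z : ℂ) : B →L[ℂ] B :=
  R1tr Rn k z - R1tr Rn k 1

/-!
With `u_j := tailNorm Rn j = ∑_{ℓ>j} ‖R_ℓ‖ ≥ ‖U_j‖` every bound is coefficientwise in
`R'_1(z) = ∑_{j<k} z^j U_j`. The identity is summation by parts: `z^n - 1 = (z - 1) ∑_{j<n} z^j`
and `∑_{j<n≤k} R'_n = U_j`. The estimates rest on `e^{ja} - 1 ≤ (ja)^r e^{ja}` for `0 ≤ r ≤ 1`: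
since `‖e^{j(a+ib)} - e^{jib}‖ = e^{ja} - 1`, and `‖z^j‖ - 1 ≤ e^{ja} - 1` for `‖z‖ ≤ e^a`,
this gives (a) with `C = 1` and (b) with `C' = 1 + ∑ u_j`. For (c) split
`‖z^j - 1‖ ≤ min ‖z^j - 1‖ 2 + (e^{ja} - 1)`: the second part is handled as before, and
`∑_j min ‖z^j - 1‖ 2 · u_j` is continuous in `z` by dominated convergence and vanishes at
`z = 1`, so `δ` can be chosen uniformly in `k` (and `k₀ = 1`).
-/

lemma Finset.sum_range_le_sum_Icc_one {f g : ℕ → ℝ} {k : ℕ} (hf0 : f 0 ≤ 0)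
    (hfg : ∀ j ∈ Finset.Icc 1 k, f j ≤ g j) (hg : ∀ j ∈ Finset.Icc 1 k, 0 ≤ g j) :
    ∑ j ∈ Finset.range k, f j ≤ ∑ j ∈ Finset.Icc 1 k, g j := by
  have hsub : {j ∈ Finset.range k | j ≠ 0} ⊆ Finset.Icc 1 k := fun j hj => by
    simp only [Finset.mem_filter, Finset.mem_range, Finset.mem_Icc] at hj ⊢
    omega
  calc ∑ j ∈ Finset.range k, f j ≤ ∑ j ∈ Finset.range k, if j ≠ 0 then g j else 0 := by
        refine Finset.sum_le_sum fun j hj => ?_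
        split_ifs with hj0
        · exact hfg j (hsub (Finset.mem_filter.2 ⟨hj, hj0⟩))
        · simpa [not_not.1 hj0] using hf0
    _ = ∑ j ∈ {j ∈ Finset.range k | j ≠ 0}, g j := (Finset.sum_filter _ _).symm
    _ ≤ ∑ j ∈ Finset.Icc 1 k, g j :=
        Finset.sum_le_sum_of_subset_of_nonneg hsub fun j hj _ => hg j hj

lemma Real.exp_sub_one_le_rpow_mul_exp {r x : ℝ} (hr0 : 0 ≤ r) (hr1 : r ≤ 1) (hx : 0 < x) :
    Real.exp x - 1 ≤ x ^ r * Real.exp x := by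
  rcases le_total x 1 with hx1 | hx1
  · have hxr : x ≤ x ^ r := by
      simpa using Real.rpow_le_rpow_of_exponent_ge hx hx1 hr1
    have h := Real.add_one_le_exp (-x)
    have hmul : Real.exp (-x) * Real.exp x = 1 := by rw [← Real.exp_add]; simp
    nlinarith [Real.exp_pos x]
  · have h1 : 1 ≤ x ^ r := Real.one_le_rpow hx1 hr0
    nlinarith [Real.exp_pos x]

lemma Complex.norm_pow_le_exp_nat_mul {z : ℂ} {a : ℝ} (hz : ‖z‖ ≤ Real.exp a) (j : ℕ) :
    ‖z ^ j‖ ≤ Real.exp (j * a) := by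
  rw [norm_pow, Real.exp_nat_mul]
  exact pow_le_pow_left₀ (norm_nonneg z) hz j

lemma Complex.norm_exp_add_mul_I_pow_sub_exp_mul_I_pow {a : ℝ} (ha : 0 ≤ a) (b : ℝ) (j : ℕ) :
    ‖Complex.exp (a + b * Complex.I) ^ j - Complex.exp (b * Complex.I) ^ j‖ =
      Real.exp (j * a) - 1 := by
  have hexp : (1 : ℝ) ≤ Real.exp (j * a) := Real.one_le_exp (by positivity)
  rw [Complex.exp_add, mul_pow, ← sub_one_mul, norm_mul, norm_pow,
    Complex.norm_exp_ofReal_mul_I, one_pow, mul_one, ← Complex.ofReal_exp, ← Complex.ofReal_pow,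
    ← Real.exp_nat_mul, ← Complex.ofReal_one, ← Complex.ofReal_sub, Complex.norm_real,
    Real.norm_of_nonneg (by linarith)]

lemma Complex.norm_pow_sub_one_le_min_add {z : ℂ} {a : ℝ} (ha : 0 ≤ a) (hz : ‖z‖ ≤ Real.exp a)
    (j : ℕ) : ‖z ^ j - 1‖ ≤ min ‖z ^ j - 1‖ 2 + (Real.exp (j * a) - 1) := by
  have hexp : (1 : ℝ) ≤ Real.exp (j * a) := Real.one_le_exp (by positivity)
  rcases le_total ‖z ^ j - 1‖ 2 with h | h
  · rw [min_eq_left h]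
    linarith
  · rw [min_eq_right h]
    have := Complex.norm_pow_le_exp_nat_mul hz j
    linarith [norm_sub_le (z ^ j) 1, norm_one (α := ℂ)]

section TruncatedSeries

variable {E : Type} [NormedAddCommGroup E] [NormedSpace ℂ E]

def tailNorm (Rn : ℕ → E →L[ℂ] E) (j : ℕ) : ℝ := ∑' ℓ : ℕ, ‖Rn (j + 1 + ℓ)‖

lemma tailNorm_nonneg (Rn : ℕ → E →L[ℂ] E) (j : ℕ) : 0 ≤ tailNorm Rn j :=
  tsum_nonneg fun _ => norm_nonneg _

lemma sum_Rntr_Ioc {Rn : ℕ → E →L[ℂ] E} (hRn : Summable Rn) {j k : ℕ} (hjk : j < k) :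
    ∑ n ∈ Finset.Ioc j k, Rntr Rn k n = Utail Rn j := by
  obtain ⟨m, rfl⟩ : ∃ m, k = j + 1 + m := ⟨k - (j + 1), by omega⟩
  have hIoc :
      Finset.Ioc j (j + 1 + m) = (Finset.range (m + 1)).map (addLeftEmbedding (j + 1)) := by
    ext n
    simp only [Finset.mem_Ioc, Finset.mem_map, Finset.mem_range, addLeftEmbedding_apply]
    constructor
    · exact fun h => ⟨n - (j + 1), by omega, by omega⟩
    · rintro ⟨ℓ, hℓ, rfl⟩; omega
  have hhead : ∀ ℓ ∈ Finset.range m, Rntr Rn (j + 1 + m) (j + 1 + ℓ) = Rn (j + 1 + ℓ) :=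
    fun ℓ hℓ => if_pos (by simp at hℓ; omega)
  have hlast : Rntr Rn (j + 1 + m) (j + 1 + m) = ∑' ℓ, Rn (j + 1 + (ℓ + m)) := by
    simp only [Rntr, lt_irrefl, if_false, if_true]
    exact tsum_congr fun ℓ => by rw [add_comm ℓ m, add_assoc]
  have hshift : Summable fun ℓ => Rn (j + 1 + ℓ) := by
    simpa only [add_comm] using (summable_nat_add_iff (j + 1)).2 hRn
  rw [hIoc, Finset.sum_map, Finset.sum_range_succ]
  simp only [addLeftEmbedding_apply]
  rw [Finset.sum_congr rfl hhead, hlast, Utail]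
  exact hshift.sum_add_tsum_nat_add m

lemma Rcaltr_sub_Rcaltr_one {Rn : ℕ → E →L[ℂ] E} (hRn : Summable Rn) (k : ℕ) (z : ℂ) :
    Rcaltr Rn k z - Rcaltr Rn k 1 = (z - 1) • R1tr Rn k z := by
  calc Rcaltr Rn k z - Rcaltr Rn k 1
      = ∑ n ∈ Finset.range (k + 1), ∑ j ∈ Finset.range n, (z - 1) • z ^ j • Rntr Rn k n := by
        rw [Rcaltr, Rcaltr, ← Finset.sum_sub_distrib]
        refine Finset.sum_congr rfl fun n _ => ?_
        rw [one_pow, ← sub_smul, ← mul_geom_sum, Finset.mul_sum, Finset.sum_smul]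
        simp only [mul_smul]
    _ = ∑ j ∈ Finset.range k, ∑ n ∈ Finset.Ioc j k, (z - 1) • z ^ j • Rntr Rn k n :=
        Finset.sum_comm' fun n j => by simp only [Finset.mem_range, Finset.mem_Ioc]; omega
    _ = (z - 1) • R1tr Rn k z := by
        rw [R1tr, Finset.smul_sum]
        refine Finset.sum_congr rfl fun j hj => ?_
        rw [← Finset.smul_sum, ← Finset.smul_sum, sum_Rntr_Ioc hRn (Finset.mem_range.1 hj)]

lemma R1tr_sub_R1tr (Rn : ℕ → E →L[ℂ] E) (k : ℕ) (z w : ℂ) :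
    R1tr Rn k z - R1tr Rn k w = ∑ j ∈ Finset.range k, (z ^ j - w ^ j) • Utail Rn j := by
  simp only [R1tr, ← Finset.sum_sub_distrib, sub_smul]

lemma norm_sum_smul_Utail_le {Rn : ℕ → E →L[ℂ] E} (hsum : Summable fun n => ‖Rn n‖) (k : ℕ)
    (c : ℕ → ℂ) :
    ‖∑ j ∈ Finset.range k, c j • Utail Rn j‖ ≤
      ∑ j ∈ Finset.range k, ‖c j‖ * tailNorm Rn j := by
  refine (norm_sum_le _ _).trans (Finset.sum_le_sum fun j _ => ?_)
  rw [norm_smul]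
  gcongr
  exact norm_tsum_le_tsum_norm
    (by simpa only [add_comm] using (summable_nat_add_iff (j + 1)).2 hsum)

lemma sum_exp_sub_one_mul_tailNorm_le (Rn : ℕ → E →L[ℂ] E) {r a : ℝ} (hr0 : 0 ≤ r)
    (hr1 : r ≤ 1) (ha : 0 < a) (k : ℕ) :
    ∑ j ∈ Finset.range k, (Real.exp (j * a) - 1) * tailNorm Rn j ≤ a ^ r * Sq Rn r k a := by
  rw [Sq, Finset.mul_sum]
  refine Finset.sum_range_le_sum_Icc_one (by simp) (fun j hj => ?_) (fun j _ => ?_)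
  · have hj : (0 : ℝ) < j := by exact_mod_cast (Finset.mem_Icc.1 hj).1
    have h := Real.exp_sub_one_le_rpow_mul_exp hr0 hr1 (mul_pos hj ha)
    rw [Real.mul_rpow hj.le ha.le] at h
    refine (mul_le_mul_of_nonneg_right h (tailNorm_nonneg Rn j)).trans_eq ?_
    rw [tailNorm]
    ring
  · positivity

lemma norm_R1tr_exp_sub_le {Rn : ℕ → E →L[ℂ] E} (hsum : Summable fun n => ‖Rn n‖) {r a : ℝ}
    (hr0 : 0 ≤ r) (hr1 : r ≤ 1) (ha : 0 < a) (b : ℝ) (k : ℕ) :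
    ‖R1tr Rn k (Complex.exp (a + b * Complex.I)) -
        R1tr Rn k (Complex.exp (b * Complex.I))‖ ≤ a ^ r * Sq Rn r k a := by
  rw [R1tr_sub_R1tr]
  refine (norm_sum_smul_Utail_le hsum k _).trans ?_
  simp only [Complex.norm_exp_add_mul_I_pow_sub_exp_mul_I_pow ha.le]
  exact sum_exp_sub_one_mul_tailNorm_le Rn hr0 hr1 ha k

lemma norm_R1tr_le {Rn : ℕ → E →L[ℂ] E} (hsum : Summable fun n => ‖Rn n‖)
    (hstar : Summable (tailNorm Rn)) {r a : ℝ} (hr0 : 0 ≤ r) (hr1 : r ≤ 1) (ha : 0 < a) (k : ℕ)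
    {z : ℂ} (hz : ‖z‖ ≤ Real.exp a) :
    ‖R1tr Rn k z‖ ≤ ∑' j, tailNorm Rn j + a ^ r * Sq Rn r k a := by
  have hpow (j : ℕ) : ‖z ^ j‖ * tailNorm Rn j ≤
      tailNorm Rn j + (Real.exp (j * a) - 1) * tailNorm Rn j := by
    nlinarith [Complex.norm_pow_le_exp_nat_mul hz j, tailNorm_nonneg Rn j]
  calc ‖R1tr Rn k z‖ ≤ ∑ j ∈ Finset.range k, ‖z ^ j‖ * tailNorm Rn j :=
        norm_sum_smul_Utail_le hsum k _
    _ ≤ ∑ j ∈ Finset.range k, tailNorm Rn j +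
          ∑ j ∈ Finset.range k, (Real.exp (j * a) - 1) * tailNorm Rn j := by
        rw [← Finset.sum_add_distrib]
        exact Finset.sum_le_sum fun j _ => hpow j
    _ ≤ ∑' j, tailNorm Rn j + a ^ r * Sq Rn r k a :=
        add_le_add (hstar.sum_le_tsum _ fun j _ => tailNorm_nonneg Rn j)
          (sum_exp_sub_one_mul_tailNorm_le Rn hr0 hr1 ha k)

lemma exists_tsum_min_norm_pow_sub_one_mul_tailNorm_lt {Rn : ℕ → E →L[ℂ] E}
    (hstar : Summable (tailNorm Rn)) {ε : ℝ} (hε : 0 < ε) :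
    ∃ δ > 0, ∀ z : ℂ, ‖z - 1‖ < δ → ∑' j, min ‖z ^ j - 1‖ 2 * tailNorm Rn j < ε := by
  have hcont : Continuous fun z : ℂ => ∑' j, min ‖z ^ j - 1‖ 2 * tailNorm Rn j :=
    continuous_tsum (fun j => by fun_prop) (hstar.mul_left 2) fun j z => by
      rw [Real.norm_of_nonneg (mul_nonneg (le_min (norm_nonneg _) zero_le_two)
        (tailNorm_nonneg Rn j))]
      exact mul_le_mul_of_nonneg_right (min_le_right _ _) (tailNorm_nonneg Rn j)
  obtain ⟨δ, hδ, h⟩ := Metric.continuousAt_iff.1 hcont.continuousAt ε hε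
  refine ⟨δ, hδ, fun z hz => ?_⟩
  have := h (x := z) (by rwa [dist_eq_norm])
  simp only [one_pow, sub_self, norm_zero, min_eq_left zero_le_two, zero_mul, tsum_zero,
    Real.dist_eq, sub_zero] at this
  exact (le_abs_self _).trans_lt this

lemma exists_norm_Rttr_le {Rn : ℕ → E →L[ℂ] E} (hsum : Summable fun n => ‖Rn n‖)
    (hstar : Summable (tailNorm Rn)) {r : ℝ} (hr0 : 0 ≤ r) (hr1 : r ≤ 1) {ε : ℝ} (hε : 0 < ε) :
    ∃ δ > 0, ∀ (k : ℕ) (a : ℝ) (z : ℂ), 0 < a → ‖z‖ ≤ Real.exp a → ‖z - 1‖ < δ →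
      ‖Rttr Rn k z‖ ≤ ε + a ^ r * Sq Rn r k a := by
  obtain ⟨δ, hδ, hsmall⟩ := exists_tsum_min_norm_pow_sub_one_mul_tailNorm_lt hstar hε
  refine ⟨δ, hδ, fun k a z ha hz hzδ => ?_⟩
  have hnonneg (j : ℕ) : 0 ≤ min ‖z ^ j - 1‖ 2 * tailNorm Rn j :=
    mul_nonneg (le_min (norm_nonneg _) zero_le_two) (tailNorm_nonneg Rn j)
  have hmin : Summable fun j => min ‖z ^ j - 1‖ 2 * tailNorm Rn j :=
    (hstar.mul_left 2).of_nonneg_of_le hnonneg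
      (fun j => mul_le_mul_of_nonneg_right (min_le_right _ _) (tailNorm_nonneg Rn j))
  calc ‖Rttr Rn k z‖ ≤ ∑ j ∈ Finset.range k, ‖z ^ j - 1‖ * tailNorm Rn j := by
        rw [Rttr, R1tr_sub_R1tr]
        simpa only [one_pow] using norm_sum_smul_Utail_le hsum k _
    _ ≤ ∑ j ∈ Finset.range k, min ‖z ^ j - 1‖ 2 * tailNorm Rn j +
          ∑ j ∈ Finset.range k, (Real.exp (j * a) - 1) * tailNorm Rn j := by
        rw [← Finset.sum_add_distrib, ← Finset.sum_congr rfl fun j _ => add_mul _ _ _]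
        exact Finset.sum_le_sum fun j _ => mul_le_mul_of_nonneg_right
          (Complex.norm_pow_sub_one_le_min_add ha.le hz j) (tailNorm_nonneg Rn j)
    _ ≤ ε + a ^ r * Sq Rn r k a :=
        add_le_add ((hmin.sum_le_tsum _ fun j _ => hnonneg j).trans (hsmall z hzδ).le)
          (sum_exp_sub_one_mul_tailNorm_le Rn hr0 hr1 ha k)

end TruncatedSeries

theorem stmt_9_general
    {B : Type} [NormedAddCommGroup B] [NormedSpace ℂ B] [CompleteSpace B]
    (Rn : ℕ → B →L[ℂ] B)
    (hsum : Summable fun j : ℕ => ‖Rn j‖)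
    (hstar : Summable fun n : ℕ => ∑' j : ℕ, ‖Rn (n + 1 + j)‖)
 :
    (∀ k : ℕ, 1 ≤ k → ∀ z : ℂ, z ≠ 1 →
        (z - 1)⁻¹ • (Rcaltr Rn k z - Rcaltr Rn k 1) = R1tr Rn k z) ∧
    (∀ r : ℝ, 0 ≤ r → r ≤ 1 →
      ∃ C : ℝ, 0 < C ∧
        ((∀ a b : ℝ, 0 < a → b ∈ Set.Icc (0 : ℝ) (2 * Real.pi) → ∀ k : ℕ, 1 ≤ k →
            ‖R1tr Rn k (Complex.exp (a + b * Complex.I)) -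
                R1tr Rn k (Complex.exp (b * Complex.I))‖ ≤ C * a ^ r * Sq Rn r k a) ∧
          (∀ ε : ℝ, 0 < ε →
            ∃ δ : ℝ, 0 < δ ∧ ∃ k₀ : ℕ, 1 ≤ k₀ ∧
              ∀ k, k₀ ≤ k → ∀ a : ℝ, 0 < a → ∀ z : ℂ,
                ‖z‖ < Real.exp a → ‖z - 1‖ < δ →
                ‖Rttr Rn k z‖ ≤ ε + C * a ^ r * Sq Rn r k a))) ∧
    (∃ C' : ℝ, 0 < C' ∧
      ∀ r : ℝ, 0 ≤ r → r ≤ 1 → ∀ a : ℝ, 0 < a → ∀ k : ℕ, 1 ≤ k → ∀ z : ℂ,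
        ‖z‖ ≤ Real.exp a →
        ‖R1tr Rn k z‖ ≤ C' * (1 + a ^ r * Sq Rn r k a)) := by
  have hT : 0 ≤ ∑' j, tailNorm Rn j := tsum_nonneg (tailNorm_nonneg Rn)
  refine ⟨fun k _ z hz => ?_,
    fun r hr0 hr1 => ⟨1, one_pos, fun a b ha _ k _ => ?_, fun ε hε => ?_⟩,
    ⟨∑' j, tailNorm Rn j + 1, by positivity, fun r hr0 hr1 a ha k _ z hz => ?_⟩⟩
  · rw [Rcaltr_sub_Rcaltr_one hsum.of_norm, inv_smul_smul₀ (sub_ne_zero.2 hz)]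
  · simpa only [one_mul] using norm_R1tr_exp_sub_le hsum hr0 hr1 ha b k
  · obtain ⟨δ, hδ, h⟩ := exists_norm_Rttr_le hsum hstar hr0 hr1 hε
    exact ⟨δ, hδ, 1, le_rfl, fun k _ a ha z hz hzδ => by
      simpa only [one_mul] using h k a z ha hz.le hzδ⟩
  · have hS : 0 ≤ a ^ r * Sq Rn r k a := by
      unfold Sq
      positivity
    calc ‖R1tr Rn k z‖ ≤ ∑' j, tailNorm Rn j + a ^ r * Sq Rn r k a :=
          norm_R1tr_le hsum hstar hr0 hr1 ha k hz
      _ ≤ (∑' j, tailNorm Rn j + 1) * (1 + a ^ r * Sq Rn r k a) := by nlinarith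

/-- Proposition 3.4.  Assume (*).  With `U_j = ∑_{ℓ>j} R_ℓ`, one has
`R'_1(z) = (z-1)⁻¹ (R'(z) - R'(1)) = ∑_{j=0}^{k-1} U_j z^j`, and
(a) for every `r ∈ [0,1]` there is `C = C(r) > 0` with
`‖R'_1(e^{a+ib}) - R'_1(e^{ib})‖ ≤ C a^r S_r(k,a)` for all `a > 0`, `b ∈ [0,2π]`, `k ≥ 1`;
(b) there is `C' > 0` with `‖R'_1(z)‖ ≤ C'(1 + a^r S_r(k,a))` for all `r ∈ [0,1]`, `a > 0`,
`k ≥ 1`, `|z| ≤ e^a`;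
(c) for every `ε > 0` there are `δ > 0`, `k₀ ≥ 1` with
`‖R̃'(z)‖ ≤ ε + C a^r S_r(k,a)` for all `k ≥ k₀`, `a > 0`, `z ∈ D_a ∩ B_δ(1)`,
where `C` is the constant from (a). -/
theorem stmt_9
    {Y : Type} [MeasurableSpace Y] (μ : Measure Y) [IsProbabilityMeasure μ]
    (F : Y → Y) (hFerg : Ergodic F μ)
    (φ : Y → ℕ) (hφmeas : Measurable φ) (hφ1 : ∀ y, 1 ≤ φ y)
    (hφint : Integrable (fun y => (φ y : ℝ)) μ)
    {B : Type} [NormedAddCommGroup B] [NormedSpace ℂ B] [CompleteSpace B]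
    (ι : B →L[ℂ] Lp ℂ 1 μ) (hι : ∀ b : B, ‖ι b‖ ≤ ‖b‖)
    (hιinj : Function.Injective fun b : B => ι b)
    (one : B) (hone : ⇑(ι one) =ᵐ[μ] fun _ => (1 : ℂ))
    (R : Lp ℂ 1 μ →L[ℂ] Lp ℂ 1 μ)
    (hR : ∀ (v : Lp ℂ 1 μ) (w : Y → ℂ), Measurable w → (∃ c, ∀ y, ‖w y‖ ≤ c) →
      ∫ y, (R v : Y → ℂ) y * w y ∂μ = ∫ y, (v : Y → ℂ) y * w (F y) ∂μ)
    (Rn : ℕ → B →L[ℂ] B) (hRn0 : Rn 0 = 0)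
    (hRnR : ∀ n : ℕ, 1 ≤ n → ∀ b : B, ∀ g : Lp ℂ 1 μ,
      ⇑g =ᵐ[μ] {y | φ y = n}.indicator ⇑(ι b) →
      ⇑(ι (Rn n b)) =ᵐ[μ] ⇑(R g))
    (hsum : Summable fun j : ℕ => ‖Rn j‖)
    (hstar : Summable fun n : ℕ => ∑' j : ℕ, ‖Rn (n + 1 + j)‖)
 :
    (∀ k : ℕ, 1 ≤ k → ∀ z : ℂ, z ≠ 1 →
        (z - 1)⁻¹ • (Rcaltr Rn k z - Rcaltr Rn k 1) = R1tr Rn k z) ∧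
    (∀ r : ℝ, 0 ≤ r → r ≤ 1 →
      ∃ C : ℝ, 0 < C ∧
        ((∀ a b : ℝ, 0 < a → b ∈ Set.Icc (0 : ℝ) (2 * Real.pi) → ∀ k : ℕ, 1 ≤ k →
            ‖R1tr Rn k (Complex.exp (a + b * Complex.I)) -
                R1tr Rn k (Complex.exp (b * Complex.I))‖ ≤ C * a ^ r * Sq Rn r k a) ∧
          (∀ ε : ℝ, 0 < ε →
            ∃ δ : ℝ, 0 < δ ∧ ∃ k₀ : ℕ, 1 ≤ k₀ ∧
              ∀ k, k₀ ≤ k → ∀ a : ℝ, 0 < a → ∀ z : ℂ,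
                ‖z‖ < Real.exp a → ‖z - 1‖ < δ →
                ‖Rttr Rn k z‖ ≤ ε + C * a ^ r * Sq Rn r k a))) ∧
    (∃ C' : ℝ, 0 < C' ∧
      ∀ r : ℝ, 0 ≤ r → r ≤ 1 → ∀ a : ℝ, 0 < a → ∀ k : ℕ, 1 ≤ k → ∀ z : ℂ,
        ‖z‖ ≤ Real.exp a →
        ‖R1tr Rn k z‖ ≤ C' * (1 + a ^ r * Sq Rn r k a)) :=
  stmt_9_general Rn hsum hstar
end
end

section
/- There is a universal constant C > 0 with the following property. Let (Y,μ) be a probability space, F : Y → Y measure preserving, φ : Y → {1,2,…} integrable, and let (Δ, f, μ_Δ) be the tower over (Y,μ,F) with height φ. For k ≥ 1 let (Δ′, f′, μ_{Δ′}) be the truncated tower with height φ′ = min(φ,k), regarding Δ′ ⊆ Δ. Then for all v, w ∈ L∞(Δ,μ_Δ) and all k, n ≥ 1: |ρ_{v,w}(n) − ρ′_{v,w}(n)| ≤ C |v|_∞ |w|_∞ ( Σ_{j>k} μ(φ > j) + n μ(φ > k) ), where ρ_{v,w}(n) = ∫_Δ v·(w∘fⁿ) dμ_Δ − ∫_Δ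 v dμ_Δ · ∫_Δ w dμ_Δ and ρ′_{v,w}(n) = ∫_{Δ′} v·(w∘f′ⁿ) dμ_{Δ′} − ∫_{Δ′} v dμ_{Δ′} · ∫_{Δ′} w dμ_{Δ′} (v, w restricted to Δ′). -/
noncomputable section

open MeasureTheory Filter Set
open scoped Topology ENNReal NNReal

universe u

variable {Y : Type u} [MeasurableSpace Y]

/-- The tower map `f : Δ → Δ`, `f(y,ℓ) = (y,ℓ+1)` for `ℓ ≤ φ(y)-2` and
`f(y,φ(y)-1) = (F y, 0)`, on the tower `Δ = {(y,ℓ) : 0 ≤ ℓ ≤ φ(y)-1}`. -/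
def towerMap (F : Y → Y) (φ : Y → ℕ) (hφ : ∀ y, 1 ≤ φ y) :
    {p : Y × ℕ // p.2 < φ p.1} → {p : Y × ℕ // p.2 < φ p.1} := fun p =>
  if h : p.1.2 + 1 < φ p.1.1 then ⟨(p.1.1, p.1.2 + 1), h⟩ else ⟨(F p.1.1, 0), hφ _⟩

/-- The truncated tower map `f' : Δ' → Δ'` (with height `φ' = min (φ, k)`), viewed as a
map of the full tower `Δ` which preserves `Δ' ⊆ Δ`. -/
def towerMapTr (F : Y → Y) (φ : Y → ℕ) (hφ : ∀ y, 1 ≤ φ y) (k : ℕ) :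
    {p : Y × ℕ // p.2 < φ p.1} → {p : Y × ℕ // p.2 < φ p.1} := fun p =>
  if h : p.1.2 + 1 < min (φ p.1.1) k then
    ⟨(p.1.1, p.1.2 + 1), lt_of_lt_of_le h (min_le_left _ _)⟩
  else ⟨(F p.1.1, 0), hφ _⟩

/-- `μ_Δ = (μ × counting)/φ̄` on the tower `Δ`. -/
def muTower (μ : Measure Y) (φ : Y → ℕ) :
    Measure {p : Y × ℕ // p.2 < φ p.1} :=
  (ENNReal.ofReal (∫ y, (φ y : ℝ) ∂μ))⁻¹ •
    Measure.comap Subtype.val (μ.prod Measure.count)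

/-- `μ_{Δ'} = (μ × counting)/φ̄'` on the truncated tower `Δ' ⊆ Δ`. -/
def muTowerTr (μ : Measure Y) (φ : Y → ℕ) (k : ℕ) :
    Measure {p : Y × ℕ // p.2 < φ p.1} :=
  (ENNReal.ofReal (∫ y, (min (φ y) k : ℝ) ∂μ))⁻¹ •
    Measure.comap Subtype.val ((μ.prod Measure.count).restrict {p | p.2 < min (φ p.1) k})

/-- the correlation function on the tower. -/
def rhoTower (μ : Measure Y) (F : Y → Y) (φ : Y → ℕ) (hφ : ∀ y, 1 ≤ φ y)
    (v w : {p : Y × ℕ // p.2 < φ p.1} → ℝ) (n : ℕ) : ℝ :=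
  ∫ x, v x * w ((towerMap F φ hφ)^[n] x) ∂muTower μ φ -
    (∫ x, v x ∂muTower μ φ) * ∫ x, w x ∂muTower μ φ

/-- the correlation function on the truncated tower. -/
def rhoTowerTr (μ : Measure Y) (F : Y → Y) (φ : Y → ℕ) (hφ : ∀ y, 1 ≤ φ y) (k : ℕ)
    (v w : {p : Y × ℕ // p.2 < φ p.1} → ℝ) (n : ℕ) : ℝ :=
  ∫ x, v x * w ((towerMapTr F φ hφ k)^[n] x) ∂muTowerTr μ φ k -
    (∫ x, v x ∂muTowerTr μ φ k) * ∫ x, w x ∂muTowerTr μ φ k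


/-!
Both towers live in `Y × ℕ` with the measure `μ × count`: `Δ = {(y, ℓ) | ℓ < φ y}` and `Δ'` is the
tower of height `min φ k` inside it, each invariant under its own tower map, and `μ_Δ`, `μ_{Δ'}` are
the normalised restrictions. Changing only the measure moves the integral of a function bounded by
`M` by at most `2 M (μ × count)(Δ \ Δ') = 2 M ∑_{j ≥ k} μ(φ > j)`, which accounts for every term of
`ρ - ρ'` except the change of dynamics. The two tower maps agree off
`D = {(y, ℓ) | k ≤ ℓ + 1 < φ y}`, so an `f'`-orbit that avoids `D` for `n` steps is also an
`f`-orbit. Inside `Δ'`, `D` is the level `k - 1` over `{φ > k}`, so by `f'`-invariance the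
remaining points have `μ_{Δ'}`-measure at most `n μ(φ > k)`.
-/

open ProbabilityTheory Function

section Correlation

variable {X : Type*} [MeasurableSpace X] {ν ν' : Measure X}

def correlation (ν : Measure X) (g : X → X) (v w : X → ℝ) (n : ℕ) : ℝ :=
  ∫ x, v x * w (g^[n] x) ∂ν - (∫ x, v x ∂ν) * ∫ x, w x ∂ν

lemma integrable_of_abs_le [IsFiniteMeasure ν] {f : X → ℝ} {M : ℝ} (hf : Measurable f)
    (hfM : ∀ x, |f x| ≤ M) : Integrable f ν :=
  .of_bound hf.aestronglyMeasurable M (.of_forall fun x => (Real.norm_eq_abs _).trans_le (hfM x))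

lemma abs_integral_le_of_abs_le [IsProbabilityMeasure ν] {f : X → ℝ} {M : ℝ}
    (hfM : ∀ x, |f x| ≤ M) : |∫ x, f x ∂ν| ≤ M := by
  simpa using norm_integral_le_of_norm_le_const (μ := ν)
    (.of_forall fun x => (Real.norm_eq_abs _).trans_le (hfM x))

lemma abs_correlation_sub_le [IsProbabilityMeasure ν] [IsProbabilityMeasure ν']
    {g g' : X → X} {v w : X → ℝ} {Mv Mw ε : ℝ} (hg : Measurable g) (hv : Measurable v)
    (hw : Measurable w) (hvM : ∀ x, |v x| ≤ Mv) (hwM : ∀ x, |w x| ≤ Mw)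
    (hclose : ∀ f : X → ℝ, Measurable f → ∀ M, (∀ x, |f x| ≤ M) →
      |∫ x, f x ∂ν - ∫ x, f x ∂ν'| ≤ M * ε) (n : ℕ) :
    |correlation ν g v w n - correlation ν' g' v w n| ≤
      3 * Mv * Mw * ε +
        |∫ x, v x * w (g^[n] x) ∂ν' - ∫ x, v x * w (g'^[n] x) ∂ν'| := by
  unfold correlation
  have hvwM : ∀ x, |v x * w (g^[n] x)| ≤ Mv * Mw := fun x => by
    rw [abs_mul]
    exact mul_le_mul (hvM x) (hwM _) (abs_nonneg _) ((abs_nonneg _).trans (hvM x))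
  have hvw := hclose (fun x => v x * w (g^[n] x)) (hv.mul (hw.comp (hg.iterate n))) _ hvwM
  have hv' := hclose v hv Mv hvM
  have hw' := hclose w hw Mw hwM
  have hvν' : |∫ x, v x ∂ν'| ≤ Mv := abs_integral_le_of_abs_le hvM
  have hwν : |∫ x, w x ∂ν| ≤ Mw := abs_integral_le_of_abs_le hwM
  set a := ∫ x, v x ∂ν
  set a' := ∫ x, v x ∂ν'
  set b := ∫ x, w x ∂ν
  set b' := ∫ x, w x ∂ν'
  have hab : |a * b - a' * b'| ≤ 2 * Mv * Mw * ε := by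
    calc |a * b - a' * b'| = |(a - a') * b + a' * (b - b')| := by ring_nf
      _ ≤ Mv * ε * Mw + Mv * (Mw * ε) := by
        refine (abs_add_le _ _).trans (add_le_add ?_ ?_) <;> rw [abs_mul]
        · exact mul_le_mul hv' hwν (abs_nonneg _) ((abs_nonneg _).trans hv')
        · exact mul_le_mul hvν' hw' (abs_nonneg _) ((abs_nonneg _).trans hvν')
      _ = 2 * Mv * Mw * ε := by ring
  calc _ = |(∫ x, v x * w (g^[n] x) ∂ν - ∫ x, v x * w (g^[n] x) ∂ν') +
        (∫ x, v x * w (g^[n] x) ∂ν' - ∫ x, v x * w (g'^[n] x) ∂ν') - (a * b - a' * b')| := by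
        congr 1; ring
    _ ≤ _ := by
      have := abs_add_three (∫ x, v x * w (g^[n] x) ∂ν - ∫ x, v x * w (g^[n] x) ∂ν')
        (∫ x, v x * w (g^[n] x) ∂ν' - ∫ x, v x * w (g'^[n] x) ∂ν') (-(a * b - a' * b'))
      rw [abs_neg, ← sub_eq_add_neg] at this
      linarith

end Correlation

section Comparison

variable {X : Type*} [MeasurableSpace X] {ν : Measure X}

lemma abs_inv_mul_add_sub_inv_mul_le {c c' I J M : ℝ} (hc' : 0 < c') (hcc' : c' ≤ c)
    (hI : |I| ≤ M * c') (hJ : |J| ≤ M * (c - c')) :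
    |c⁻¹ * (I + J) - c'⁻¹ * I| ≤ 2 * M * (c - c') / c := by
  have hc : 0 < c := hc'.trans_le hcc'
  have hI' : |c'⁻¹ * I| ≤ M := by
    rw [abs_mul, abs_inv, abs_of_pos hc', inv_mul_le_iff₀ hc']
    linarith
  have key : c⁻¹ * (I + J) - c'⁻¹ * I = (J - (c - c') * (c'⁻¹ * I)) / c := by
    field_simp
    ring
  rw [key, abs_div, abs_of_pos hc, div_le_div_iff_of_pos_right hc]
  calc |J - (c - c') * (c'⁻¹ * I)| ≤ |J| + (c - c') * |c'⁻¹ * I| := by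
        rw [← abs_of_nonneg (sub_nonneg.2 hcc'), ← abs_mul, abs_of_nonneg (sub_nonneg.2 hcc')]
        exact abs_sub _ _
    _ ≤ M * (c - c') + (c - c') * M := by gcongr
    _ = 2 * M * (c - c') := by ring

lemma abs_integral_cond_sub_integral_cond_le {s t : Set X} (ht : MeasurableSet t) (hts : t ⊆ s)
    (hs : ν s ≠ ∞) (ht0 : ν t ≠ 0) {f : X → ℝ} {M : ℝ} (hf : Measurable f)
    (hfM : ∀ x, |f x| ≤ M) :
    |∫ x, f x ∂ν[|s] - ∫ x, f x ∂ν[|t]| ≤ 2 * M * ν.real (s \ t) / ν.real s := by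
  have : IsFiniteMeasure (ν.restrict s) := isFiniteMeasure_restrict.2 hs
  have hfs : IntegrableOn f s ν := integrable_of_abs_le hf hfM
  have hsetIntegral_le : ∀ u ⊆ s, |∫ x in u, f x ∂ν| ≤ M * ν.real u := fun u hu =>
    norm_setIntegral_le_of_norm_le_const ((measure_mono hu).trans_lt hs.lt_top)
      fun x _ => (Real.norm_eq_abs _).trans_le (hfM x)
  have hsplit : ∫ x in s, f x ∂ν = ∫ x in t, f x ∂ν + ∫ x in s \ t, f x ∂ν := by
    rw [setIntegral_sdiff ht hfs hts]
    ring
  have ht_real : 0 < ν.real t :=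
    ENNReal.toReal_pos ht0 (ne_top_of_le_ne_top hs (measure_mono hts))
  have hJ : |∫ x in s \ t, f x ∂ν| ≤ M * (ν.real s - ν.real t) := by
    rw [← measureReal_sdiff hts ht hs]
    exact hsetIntegral_le _ sdiff_subset
  simp only [ProbabilityTheory.cond, integral_smul_measure, ENNReal.toReal_inv, smul_eq_mul]
  rw [hsplit, measureReal_sdiff hts ht hs]
  exact abs_inv_mul_add_sub_inv_mul_le ht_real (measureReal_mono hts hs)
    (hsetIntegral_le t hts) hJ

end Comparison

section Coupling

variable {X : Type*} {g g' : X → X} {D : Set X}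

lemma iterate_eq_of_forall_iterate_notMem (hgD : ∀ x ∉ D, g x = g' x) {x : X} :
    ∀ {n : ℕ}, (∀ i < n, g'^[i] x ∉ D) → g^[n] x = g'^[n] x
  | 0, _ => rfl
  | n + 1, hx => by
    rw [iterate_succ_apply', iterate_succ_apply',
      iterate_eq_of_forall_iterate_notMem hgD fun i hi => hx i (by omega),
      hgD _ (hx n (by omega))]

variable [MeasurableSpace X] {ν : Measure X}

lemma abs_integral_iterate_sub_le [IsProbabilityMeasure ν] (hg : Measurable g)
    (hg' : MeasurePreserving g' ν ν) (hD : MeasurableSet D) (hgD : ∀ x ∉ D, g x = g' x)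
    {v w : X → ℝ} {Mv Mw : ℝ} (hv : Measurable v) (hw : Measurable w)
    (hvM : ∀ x, |v x| ≤ Mv) (hwM : ∀ x, |w x| ≤ Mw) (n : ℕ) :
    |∫ x, v x * w (g^[n] x) ∂ν - ∫ x, v x * w (g'^[n] x) ∂ν| ≤
      2 * Mv * Mw * n * ν.real D := by
  set U := ⋃ i ∈ Finset.range n, g'^[i] ⁻¹' D
  have hU : MeasurableSet U :=
    .biUnion (Finset.range n).countable_toSet fun i _ => hg'.measurable.iterate i hD
  have hνU : ν.real U ≤ n * ν.real D := by
    calc ν.real U ≤ ∑ i ∈ Finset.range n, ν.real (g'^[i] ⁻¹' D) :=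
          measureReal_biUnion_finset_le _ _
      _ = n * ν.real D := by
        simp [(hg'.iterate _).measureReal_preimage hD.nullMeasurableSet]
  obtain ⟨x₀⟩ := nonempty_of_isProbabilityMeasure ν
  have hMv : 0 ≤ Mv := (abs_nonneg _).trans (hvM x₀)
  have hMw : 0 ≤ Mw := (abs_nonneg _).trans (hwM x₀)
  have hvwM : ∀ h : X → X, ∀ x, |v x * w (h x)| ≤ Mv * Mw := fun h x => by
    rw [abs_mul]
    exact mul_le_mul (hvM x) (hwM _) (abs_nonneg _) ((abs_nonneg _).trans (hvM x))
  set d := fun x => v x * w (g^[n] x) - v x * w (g'^[n] x)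
  have hdM : ∀ x, |d x| ≤ 2 * Mv * Mw := fun x =>
    (abs_sub _ _).trans (by linarith [hvwM (g^[n]) x, hvwM (g'^[n]) x])
  have hd_eq_zero : ∀ x ∉ U, d x = 0 := fun x hx => by
    simp only [U, mem_iUnion, Finset.mem_range, mem_preimage, not_exists] at hx
    simp [d, iterate_eq_of_forall_iterate_notMem hgD hx]
  have hint : ∀ h : X → X, Measurable h → Integrable (fun x => v x * w (h^[n] x)) ν :=
    fun h hh => integrable_of_abs_le (hv.mul (hw.comp (hh.iterate n))) (hvwM _)
  rw [← integral_sub (hint g hg) (hint g' hg'.measurable),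
    ← setIntegral_eq_integral_of_forall_compl_eq_zero hd_eq_zero]
  calc |∫ x in U, d x ∂ν| ≤ 2 * Mv * Mw * ν.real U :=
        norm_setIntegral_le_of_norm_le_const (measure_lt_top _ _)
          fun x _ => (Real.norm_eq_abs _).trans_le (hdM x)
    _ ≤ 2 * Mv * Mw * (n * ν.real D) := by gcongr
    _ = _ := by ring

end Coupling

lemma abs_extend_subtypeVal_le {X : Type*} {s : Set X} {v : s → ℝ} {M : ℝ} (hM : 0 ≤ M)
    (hvM : ∀ x, |v x| ≤ M) (p : X) : |extend Subtype.val v 0 p| ≤ M := by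
  by_cases hp : ∃ x : s, ↑x = p
  · obtain ⟨x, rfl⟩ := hp
    rw [Subtype.val_injective.extend_apply]
    exact hvM x
  · rw [extend_apply' _ _ _ hp]
    simpa using hM

section Transfer

variable {X : Type*} [MeasurableSpace X]

lemma correlation_smul_comap_subtypeVal {s : Set X} (hs : MeasurableSet s) (ν : Measure X)
    (c : ℝ≥0∞) {g : s → s} {G : X → X} (hgG : Semiconj Subtype.val g G) (v w : s → ℝ)
    (n : ℕ) :
    correlation (c • ν.comap Subtype.val) g v w n =
      correlation (c • ν.restrict s) G (extend Subtype.val v 0) (extend Subtype.val w 0) n := by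
  have hcomap : ∀ f : X → ℝ,
      ∫ x : s, f x ∂(c • ν.comap Subtype.val) = ∫ x, f x ∂(c • ν.restrict s) := fun f => by
    rw [integral_smul_measure, integral_smul_measure, integral_subtype_comap hs]
  have hext : ∀ (u : s → ℝ) (x : s), extend Subtype.val u 0 x = u x := fun u x =>
    Subtype.val_injective.extend_apply _ _ _
  unfold correlation
  rw [← hcomap, ← hcomap, ← hcomap]
  simp only [hext, ← (hgG.iterate_right n) _]

end Transfer

section Tower

variable {Y : Type*} {F : Y → Y} {φ : Y → ℕ}

def towerSet (φ : Y → ℕ) : Set (Y × ℕ) := {p | p.2 < φ p.1}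

def towerStep (F : Y → Y) (φ : Y → ℕ) (p : Y × ℕ) : Y × ℕ :=
  if p.2 + 1 < φ p.1 then (p.1, p.2 + 1) else (F p.1, 0)

lemma semiconj_towerMap (hφ1 : ∀ y, 1 ≤ φ y) :
    Semiconj Subtype.val (towerMap F φ hφ1) (towerStep F φ) := fun x => by
  unfold towerMap towerStep
  split_ifs <;> rfl

lemma semiconj_towerMapTr (hφ1 : ∀ y, 1 ≤ φ y) (k : ℕ) :
    Semiconj Subtype.val (towerMapTr F φ hφ1 k) (towerStep F fun y => min (φ y) k) := fun x => by
  unfold towerMapTr towerStep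
  split_ifs <;> rfl

variable [MeasurableSpace Y] {μ : Measure Y}

lemma measurableSet_towerSet (hφ : Measurable φ) : MeasurableSet (towerSet φ) :=
  measurableSet_lt measurable_snd (hφ.comp measurable_fst)

lemma measurable_towerStep (hF : Measurable F) (hφ : Measurable φ) :
    Measurable (towerStep F φ) :=
  Measurable.ite (measurableSet_lt (measurable_snd.add_const 1) (hφ.comp measurable_fst))
    (measurable_fst.prodMk (measurable_snd.add_const 1))
    ((hF.comp measurable_fst).prodMk measurable_const)

lemma prod_count_apply_eq_tsum [SFinite μ] {S : Set (Y × ℕ)} (hS : MeasurableSet S) :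
    μ.prod Measure.count S = ∑' ℓ, μ {y | (y, ℓ) ∈ S} := by
  rw [Measure.prod_apply_symm hS, lintegral_count]
  rfl

lemma prod_count_towerSet [SFinite μ] (hφ : Measurable φ) :
    μ.prod Measure.count (towerSet φ) = ∫⁻ y, φ y ∂μ := by
  rw [Measure.prod_apply (measurableSet_towerSet hφ)]
  congr with y
  rw [show Prod.mk y ⁻¹' towerSet φ = ↑(Finset.range (φ y)) by ext; simp [towerSet],
    Measure.count_apply_finset, Finset.card_range]

lemma prod_count_towerSet_eq_ofReal [SFinite μ] (hφ : Measurable φ)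
    (hint : Integrable (fun y => (φ y : ℝ)) μ) :
    μ.prod Measure.count (towerSet φ) = ENNReal.ofReal (∫ y, (φ y : ℝ) ∂μ) := by
  rw [prod_count_towerSet hφ,
    ofReal_integral_eq_lintegral_ofReal hint (.of_forall fun _ => by positivity)]
  simp

lemma prod_count_towerSet_ne_top [SFinite μ] (hφ : Measurable φ)
    (hint : Integrable (fun y => (φ y : ℝ)) μ) : μ.prod Measure.count (towerSet φ) ≠ ∞ := by
  rw [prod_count_towerSet_eq_ofReal hφ hint]
  exact ENNReal.ofReal_ne_top

lemma one_le_prod_count_towerSet [IsProbabilityMeasure μ] (hφ : Measurable φ)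
    (hφ1 : ∀ y, 1 ≤ φ y) : 1 ≤ μ.prod Measure.count (towerSet φ) := by
  rw [prod_count_towerSet hφ, ← measure_univ (μ := μ), ← lintegral_one]
  exact lintegral_mono fun y => Nat.one_le_cast.2 (hφ1 y)

lemma isProbabilityMeasure_cond_towerSet [IsProbabilityMeasure μ] (hφ : Measurable φ)
    (hφ1 : ∀ y, 1 ≤ φ y) (hfin : μ.prod Measure.count (towerSet φ) ≠ ∞) :
    IsProbabilityMeasure ((μ.prod Measure.count)[|towerSet φ]) :=
  cond_isProbabilityMeasure_of_finite
    (zero_lt_one.trans_le (one_le_prod_count_towerSet hφ hφ1)).ne' hfin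

lemma measurePreserving_towerStep [SFinite μ] (hF : MeasurePreserving F μ μ)
    (hφ : Measurable φ) (hφ1 : ∀ y, 1 ≤ φ y) :
    MeasurePreserving (towerStep F φ) ((μ.prod Measure.count).restrict (towerSet φ))
      ((μ.prod Measure.count).restrict (towerSet φ)) := by
  have hstep := measurable_towerStep hF.measurable hφ
  have hT := measurableSet_towerSet hφ
  refine ⟨hstep, Measure.ext fun A hA => ?_⟩
  let level (ℓ : ℕ) : Set Y := {y | (y, ℓ) ∈ A}
  have hlevel (ℓ : ℕ) : MeasurableSet (level ℓ) := measurable_prodMk_right hA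
  have hφeq (ℓ : ℕ) : MeasurableSet {y | φ y = ℓ} := hφ (measurableSet_singleton ℓ)
  have hsplit (ℓ : ℕ) : {y | (y, ℓ) ∈ towerStep F φ ⁻¹' A ∩ towerSet φ} =
      ({y | ℓ + 1 < φ y} ∩ level (ℓ + 1)) ∪ ({y | φ y = ℓ + 1} ∩ F ⁻¹' level 0) := by
    ext y
    simp only [towerStep, towerSet, level, mem_ofPred_eq, mem_inter_iff, mem_preimage,
      mem_union]
    split_ifs <;> grind
  have hreturn : ∑' ℓ, μ ({y | φ y = ℓ + 1} ∩ F ⁻¹' level 0) = μ (level 0) := by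
    have hcover : ⋃ ℓ : ℕ, {y | φ y = ℓ + 1} = univ := eq_univ_of_forall fun y =>
      mem_iUnion.2 ⟨φ y - 1, by have := hφ1 y; simp only [mem_ofPred_eq]; omega⟩
    rw [← measure_iUnion, ← iUnion_inter, hcover, univ_inter,
      hF.measure_preimage (hlevel 0).nullMeasurableSet]
    · exact fun i j hij => Disjoint.mono inter_subset_left inter_subset_left
        (disjoint_left.2 fun y (hi : φ y = i + 1) (hj : φ y = j + 1) => hij (by omega))
    · exact fun ℓ => (hφeq _).inter (hF.measurable (hlevel 0))
  rw [Measure.map_apply hstep hA, Measure.restrict_apply (hstep hA), Measure.restrict_apply hA,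
    prod_count_apply_eq_tsum ((hstep hA).inter hT), prod_count_apply_eq_tsum (hA.inter hT)]
  have hlevel_tower (ℓ : ℕ) : {y | (y, ℓ) ∈ A ∩ towerSet φ} = {y | ℓ < φ y} ∩ level ℓ := by
    ext y; simp [towerSet, level, and_comm]
  have hbase : {y | (y, 0) ∈ A ∩ towerSet φ} = level 0 := by
    rw [hlevel_tower, show {y | 0 < φ y} = univ from eq_univ_of_forall hφ1, univ_inter]
  simp only [hsplit]
  calc ∑' ℓ, μ ({y | ℓ + 1 < φ y} ∩ level (ℓ + 1) ∪ {y | φ y = ℓ + 1} ∩ F ⁻¹' level 0)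
      = ∑' ℓ, μ ({y | ℓ + 1 < φ y} ∩ level (ℓ + 1)) + μ (level 0) := by
        rw [← hreturn, ← ENNReal.tsum_add]
        congr with ℓ
        refine measure_union ?_ ((hφeq _).inter (hF.measurable (hlevel 0)))
        exact Disjoint.mono inter_subset_left inter_subset_left
          (disjoint_left.2 fun y (h : ℓ + 1 < φ y) (h' : φ y = ℓ + 1) => by omega)
    _ = _ := by
        rw [tsum_eq_zero_add' (f := fun ℓ => μ {y | (y, ℓ) ∈ A ∩ towerSet φ}) ENNReal.summable,
          hbase, add_comm]
        simp only [hlevel_tower]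

lemma rhoTower_eq_correlation [SFinite μ] (hφ : Measurable φ)
    (hint : Integrable (fun y => (φ y : ℝ)) μ) (hφ1 : ∀ y, 1 ≤ φ y)
    (v w : {p : Y × ℕ // p.2 < φ p.1} → ℝ) (n : ℕ) :
    rhoTower μ F φ hφ1 v w n =
      correlation ((μ.prod Measure.count)[|towerSet φ]) (towerStep F φ)
        (extend Subtype.val v 0) (extend Subtype.val w 0) n := by
  change correlation (muTower μ φ) (towerMap F φ hφ1) v w n = _
  rw [muTower, ← prod_count_towerSet_eq_ofReal hφ hint]
  exact correlation_smul_comap_subtypeVal (measurableSet_towerSet hφ) _ _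
    (semiconj_towerMap hφ1) v w n

end Tower

section Truncation

variable {Y : Type*} {F : Y → Y} {φ : Y → ℕ} {k : ℕ}

def towerCut (φ : Y → ℕ) (k : ℕ) : Set (Y × ℕ) := {p | k ≤ p.2 + 1 ∧ p.2 + 1 < φ p.1}

lemma towerSet_min_subset : towerSet (fun y => min (φ y) k) ⊆ towerSet φ :=
  fun p (hp : p.2 < min (φ p.1) k) => hp.trans_le (min_le_left _ _)

lemma towerStep_min_eq_of_notMem {p : Y × ℕ} (hp : p ∉ towerCut φ k) :
    towerStep F φ p = towerStep F (fun y => min (φ y) k) p := by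
  simp only [towerCut, mem_ofPred_eq, not_and, not_lt] at hp
  simp only [towerStep, lt_min_iff]
  split_ifs <;> first | rfl | omega

variable [MeasurableSpace Y] {μ : Measure Y}

lemma measurableSet_towerCut (hφ : Measurable φ) : MeasurableSet (towerCut φ k) :=
  (measurableSet_le measurable_const (measurable_snd.add_const 1)).inter
    (measurableSet_lt (measurable_snd.add_const 1) (hφ.comp measurable_fst))

lemma rhoTowerTr_eq_correlation [IsFiniteMeasure μ] (hφ : Measurable φ) (hφ1 : ∀ y, 1 ≤ φ y)
    (v w : {p : Y × ℕ // p.2 < φ p.1} → ℝ) (n : ℕ) :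
    rhoTowerTr μ F φ hφ1 k v w n =
      correlation ((μ.prod Measure.count)[|towerSet fun y => min (φ y) k])
        (towerStep F fun y => min (φ y) k) (extend Subtype.val v 0) (extend Subtype.val w 0) n := by
  have hint : Integrable (fun y => ((min (φ y) k : ℕ) : ℝ)) μ :=
    integrable_of_abs_le (M := k) (by fun_prop) fun y => by
      rw [abs_of_nonneg (Nat.cast_nonneg _)]
      exact_mod_cast min_le_right _ _
  have hmass : ENNReal.ofReal (∫ y, (min (φ y) k : ℝ) ∂μ) =
      μ.prod Measure.count (towerSet fun y => min (φ y) k) := by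
    rw [prod_count_towerSet_eq_ofReal (hφ.min measurable_const) hint]
    simp [Nat.cast_min]
  change correlation (muTowerTr μ φ k) (towerMapTr F φ hφ1 k) v w n = _
  rw [muTowerTr, hmass]
  refine (correlation_smul_comap_subtypeVal (measurableSet_towerSet hφ) _ _
    (semiconj_towerMapTr hφ1 k) v w n).trans ?_
  have hres : ((μ.prod Measure.count).restrict {p : Y × ℕ | p.2 < min (φ p.1) k}).restrict
      (towerSet φ) = (μ.prod Measure.count).restrict (towerSet fun y => min (φ y) k) := by
    rw [Measure.restrict_restrict (measurableSet_towerSet hφ)]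
    exact congrArg _ (inter_eq_right.2 towerSet_min_subset)
  simp only [ProbabilityTheory.cond, hres]
  rfl

lemma prod_count_towerSet_sdiff_min [SFinite μ] (hφ : Measurable φ) :
    μ.prod Measure.count (towerSet φ \ towerSet fun y => min (φ y) k) =
      ∑' j, μ {y | k + j < φ y} := by
  rw [prod_count_apply_eq_tsum ((measurableSet_towerSet hφ).diff
    (measurableSet_towerSet (hφ.min measurable_const))),
    ← (ENNReal.summable.sum_add_tsum_nat_add' (k := k))]
  have hlow : ∀ ℓ ∈ Finset.range k,
      μ {y | (y, ℓ) ∈ towerSet φ \ towerSet fun y => min (φ y) k} = 0 := fun ℓ hℓ => by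
    rw [Finset.mem_range] at hℓ
    convert measure_empty (μ := μ)
    ext y
    simp [towerSet]
    omega
  rw [Finset.sum_eq_zero hlow, zero_add]
  congr with j
  congr with y
  simp [towerSet]
  omega

lemma prod_count_real_towerSet_sdiff_min [SFinite μ] (hφ : Measurable φ)
    (hfin : μ.prod Measure.count (towerSet φ) ≠ ∞) :
    (μ.prod Measure.count).real (towerSet φ \ towerSet fun y => min (φ y) k) =
      (μ {y | k < φ y}).toReal + ∑' j : ℕ, (μ {y | k + 1 + j < φ y}).toReal := by
  have hsplit : ∑' j, μ {y | k + j < φ y} = μ {y | k < φ y} + ∑' j, μ {y | k + 1 + j < φ y} := by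
    rw [tsum_eq_zero_add' ENNReal.summable]
    simp only [add_zero, add_assoc, add_comm 1]
  have hfin' : ∑' j, μ {y | k + j < φ y} ≠ ∞ := by
    rw [← prod_count_towerSet_sdiff_min hφ]
    exact ne_top_of_le_ne_top hfin (measure_mono sdiff_subset)
  rw [hsplit] at hfin'
  rw [measureReal_def, prod_count_towerSet_sdiff_min hφ, hsplit,
    ENNReal.toReal_add (ENNReal.add_ne_top.1 hfin').1 (ENNReal.add_ne_top.1 hfin').2,
    ENNReal.tsum_toReal_eq fun j => ?_]
  exact ne_top_of_le_ne_top (ENNReal.add_ne_top.1 hfin').2 (ENNReal.le_tsum j)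

lemma prod_count_towerSet_min_inter_towerCut_le [SFinite μ] :
    μ.prod Measure.count
        (towerSet (fun y => min (φ y) k) ∩ towerCut φ k) ≤
      μ {y | k < φ y} := by
  calc _ ≤ μ.prod Measure.count ({y | k < φ y} ×ˢ {k - 1}) := by
        refine measure_mono fun p ⟨hp, hp'⟩ => ?_
        simp only [towerSet, towerCut, mem_ofPred_eq, lt_min_iff] at hp hp'
        simp only [mem_prod, mem_ofPred_eq, mem_singleton_iff]
        omega
    _ = μ {y | k < φ y} := by
        rw [Measure.prod_prod, Measure.count_singleton, mul_one]

lemma cond_towerSet_min_real_towerCut_le [IsProbabilityMeasure μ] (hφ : Measurable φ)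
    (hφ1 : ∀ y, 1 ≤ φ y) (hk : 1 ≤ k) :
    ((μ.prod Measure.count)[|towerSet fun y => min (φ y) k]).real (towerCut φ k) ≤
      (μ {y | k < φ y}).toReal := by
  have hψ : Measurable fun y => min (φ y) k := hφ.min measurable_const
  rw [measureReal_def, cond_apply (measurableSet_towerSet hψ)]
  refine ENNReal.toReal_mono (measure_ne_top _ _) ?_
  calc _ ≤ 1 * μ.prod Measure.count (towerSet (fun y => min (φ y) k) ∩ towerCut φ k) := by
        gcongr
        exact ENNReal.inv_le_one.2 (one_le_prod_count_towerSet hψ fun y => le_min (hφ1 y) hk)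
    _ ≤ _ := by
        rw [one_mul]
        exact prod_count_towerSet_min_inter_towerCut_le

lemma abs_integral_cond_towerSet_sub_le [IsProbabilityMeasure μ] (hφ : Measurable φ)
    (hφ1 : ∀ y, 1 ≤ φ y) (hint : Integrable (fun y => (φ y : ℝ)) μ) (hk : 1 ≤ k)
    {f : Y × ℕ → ℝ} {M : ℝ} (hf : Measurable f) (hfM : ∀ p, |f p| ≤ M) :
    |∫ p, f p ∂(μ.prod Measure.count)[|towerSet φ] -
        ∫ p, f p ∂(μ.prod Measure.count)[|towerSet fun y => min (φ y) k]| ≤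
      M * (2 * ((μ {y | k < φ y}).toReal + ∑' j : ℕ, (μ {y | k + 1 + j < φ y}).toReal)) := by
  have hψ : Measurable fun y => min (φ y) k := hφ.min measurable_const
  have hfin := prod_count_towerSet_ne_top hφ hint
  have hmass' := one_le_prod_count_towerSet (μ := μ) hψ fun y => le_min (hφ1 y) hk
  have hmass : 1 ≤ (μ.prod Measure.count).real (towerSet φ) := by
    rw [← ENNReal.toReal_one]
    exact ENNReal.toReal_mono hfin (hmass'.trans (measure_mono towerSet_min_subset))
  obtain ⟨y₀⟩ := nonempty_of_isProbabilityMeasure μ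
  have hM : 0 ≤ M := (abs_nonneg _).trans (hfM (y₀, 0))
  refine (abs_integral_cond_sub_integral_cond_le (measurableSet_towerSet hψ) towerSet_min_subset
    hfin (zero_lt_one.trans_le hmass').ne' hf hfM).trans ?_
  rw [← prod_count_real_towerSet_sdiff_min hφ hfin]
  calc _ = M * 2 * ((μ.prod Measure.count).real (towerSet φ \ towerSet fun y => min (φ y) k) /
        (μ.prod Measure.count).real (towerSet φ)) := by ring
    _ ≤ M * 2 * (μ.prod Measure.count).real (towerSet φ \ towerSet fun y => min (φ y) k) :=
        mul_le_mul_of_nonneg_left (div_le_self measureReal_nonneg hmass) (by linarith)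
    _ = _ := by ring

lemma abs_correlation_towerStep_sub_le [IsProbabilityMeasure μ] (hF : MeasurePreserving F μ μ)
    (hφ : Measurable φ) (hφ1 : ∀ y, 1 ≤ φ y) (hint : Integrable (fun y => (φ y : ℝ)) μ)
    {V W : Y × ℕ → ℝ} {Mv Mw : ℝ} (hV : Measurable V) (hW : Measurable W)
    (hVM : ∀ p, |V p| ≤ Mv) (hWM : ∀ p, |W p| ≤ Mw) (hk : 1 ≤ k) {n : ℕ} (hn : 1 ≤ n) :
    |correlation ((μ.prod Measure.count)[|towerSet φ]) (towerStep F φ) V W n -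
        correlation ((μ.prod Measure.count)[|towerSet fun y => min (φ y) k])
          (towerStep F fun y => min (φ y) k) V W n| ≤
      8 * Mv * Mw * ((∑' j : ℕ, (μ {y | k + 1 + j < φ y}).toReal) +
        (n : ℝ) * (μ {y | k < φ y}).toReal) := by
  set q := (μ {y | k < φ y}).toReal
  set T := ∑' j : ℕ, (μ {y | k + 1 + j < φ y}).toReal
  have hψ : Measurable fun y => min (φ y) k := hφ.min measurable_const
  have hψ1 : ∀ y, 1 ≤ min (φ y) k := fun y => le_min (hφ1 y) hk
  have hfin := prod_count_towerSet_ne_top hφ hint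
  have := isProbabilityMeasure_cond_towerSet hφ hφ1 hfin
  have := isProbabilityMeasure_cond_towerSet hψ hψ1
    (ne_top_of_le_ne_top hfin (measure_mono towerSet_min_subset))
  obtain ⟨y₀⟩ := nonempty_of_isProbabilityMeasure μ
  have hMv : 0 ≤ Mv := (abs_nonneg _).trans (hVM (y₀, 0))
  have hMw : 0 ≤ Mw := (abs_nonneg _).trans (hWM (y₀, 0))
  have hcoupling := abs_integral_iterate_sub_le
    (ν := (μ.prod Measure.count)[|towerSet fun y => min (φ y) k])
    (measurable_towerStep hF.measurable hφ)
    ((measurePreserving_towerStep hF hψ hψ1).smul_measure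
      (μ.prod Measure.count (towerSet fun y => min (φ y) k))⁻¹) (measurableSet_towerCut hφ)
    (fun p hp => towerStep_min_eq_of_notMem hp) hV hW hVM hWM n
  calc _ ≤ 3 * Mv * Mw * (2 * (q + T)) + 2 * Mv * Mw * n * q :=
        (abs_correlation_sub_le (measurable_towerStep hF.measurable hφ) hV hW hVM hWM
          (fun f hf M hfM => abs_integral_cond_towerSet_sub_le hφ hφ1 hint hk hf hfM) n).trans
          (add_le_add le_rfl (hcoupling.trans (by
            gcongr
            exact cond_towerSet_min_real_towerCut_le hφ hφ1 hk)))
    _ ≤ 8 * Mv * Mw * (T + n * q) := by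
        have hq : q ≤ n * q := le_mul_of_one_le_left ENNReal.toReal_nonneg (by exact_mod_cast hn)
        have hT : 0 ≤ T := tsum_nonneg fun _ => ENNReal.toReal_nonneg
        linarith [mul_le_mul_of_nonneg_left hq (mul_nonneg hMv hMw),
          mul_nonneg (mul_nonneg hMv hMw) hT]

end Truncation

/-- Corollary A.3.  There is a universal constant `C > 0` such that for any
probability space `(Y,μ)`, measure preserving `F`, integrable `φ ≥ 1`, tower `(Δ,f,μ_Δ)` and
truncated tower `(Δ',f',μ_{Δ'})` of height `φ' = min(φ,k)`, and all `v, w ∈ L^∞(Δ)`,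
`|ρ_{v,w}(n) - ρ'_{v,w}(n)| ≤ C |v|_∞ |w|_∞ (∑_{j>k} μ(φ>j) + n μ(φ>k))` for all `k, n ≥ 1`. -/
theorem stmt_16 :
    ∃ C : ℝ, 0 < C ∧
      ∀ (Y : Type u) [MeasurableSpace Y] (μ : Measure Y) [IsProbabilityMeasure μ]
        (F : Y → Y), MeasurePreserving F μ μ →
        ∀ (φ : Y → ℕ) (hφ1 : ∀ y, 1 ≤ φ y), Measurable φ →
          Integrable (fun y => (φ y : ℝ)) μ →
          ∀ (v w : {p : Y × ℕ // p.2 < φ p.1} → ℝ) (Mv Mw : ℝ),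
            Measurable v → Measurable w →
            (∀ x, |v x| ≤ Mv) → (∀ x, |w x| ≤ Mw) →
            ∀ k n : ℕ, 1 ≤ k → 1 ≤ n →
              |rhoTower μ F φ hφ1 v w n - rhoTowerTr μ F φ hφ1 k v w n| ≤
                C * Mv * Mw *
                  ((∑' j : ℕ, (μ {y | k + 1 + j < φ y}).toReal) +
                    (n : ℝ) * (μ {y | k < φ y}).toReal) := by
  refine ⟨8, by norm_num, ?_⟩
  intro Y _ μ _ F hF φ hφ1 hφ hint v w Mv Mw hv hw hvM hwM k n hk hn
  obtain ⟨y₀⟩ := nonempty_of_isProbabilityMeasure μ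
  have hΔ := MeasurableEmbedding.subtype_coe (measurableSet_towerSet hφ)
  rw [rhoTower_eq_correlation hφ hint hφ1, rhoTowerTr_eq_correlation hφ hφ1]
  exact abs_correlation_towerStep_sub_le hF hφ hφ1 hint
    (hΔ.measurable_extend hv measurable_const) (hΔ.measurable_extend hw measurable_const)
    (abs_extend_subtypeVal_le ((abs_nonneg _).trans (hvM ⟨(y₀, 0), hφ1 y₀⟩)) hvM)
    (abs_extend_subtypeVal_le ((abs_nonneg _).trans (hwM ⟨(y₀, 0), hφ1 y₀⟩)) hwM) hk hn
end
end

section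
/- For every q ∈ (0,1] there exists a constant C = C(q) > 0 with the following property. Let X be a complex Banach space, a > 0, S ≥ 0, and let H be analytic on the disk D = {z ∈ ℂ : |z| < e^a} with values in X, with power series H(z) = Σ_{n≥0} H_n zⁿ (H_n ∈ X) converging on D. If ‖H(z)‖ ≤ S |z−1|^{q−1} for all z ∈ D with z ≠ 1, then ‖H_n‖ ≤ C S e^{−n a} for all n ≥ 0. -/
/-!
By the Cauchy estimate on the circle `|z| = r` with `1 < r < e^a`, `‖H_n‖ rⁿ` is at most the mean
of `‖H‖` over that circle. There `|r e^{iθ} - 1| ≥ |e^{iθ} - 1| ≥ 2|θ|/π` for `|θ| ≤ π`, so the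
mean is at most `S (2π)⁻¹ ∫_{-π}^{π} (2|θ|/π)^{q-1} dθ = 2^{q-1} S / q`, finite because `q > 0`.
Letting `r → e^a` gives the claim with `C = 2^{q-1} / q`.
-/

open Real Set MeasureTheory Filter Topology
open scoped NNReal ENNReal

namespace Complex

lemma norm_exp_mul_I_sub_one_le_norm_circleMap_sub_one {r : ℝ} (hr : 1 ≤ r) (θ : ℝ) :
    ‖exp (θ * I) - 1‖ ≤ ‖circleMap 0 r θ - 1‖ := by
  have hsq : ‖circleMap 0 r θ - 1‖ ^ 2 - ‖exp (θ * I) - 1‖ ^ 2 =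
      (r - 1) ^ 2 + 2 * (r - 1) * (1 - Real.cos θ) := by
    simp only [Complex.sq_norm, normSq_apply, circleMap_zero, sub_re, sub_im, one_re, one_im,
      exp_ofReal_mul_I_re, exp_ofReal_mul_I_im, re_ofReal_mul, im_ofReal_mul]
    linear_combination (r ^ 2 - 1) * Real.sin_sq_add_cos_sq θ
  refine (pow_le_pow_iff_left₀ (norm_nonneg _) (norm_nonneg _) two_ne_zero).1 ?_
  nlinarith [mul_nonneg (sub_nonneg.2 hr) (sub_nonneg.2 (Real.cos_le_one θ))]

lemma two_div_pi_mul_abs_le_norm_exp_mul_I_sub_one {θ : ℝ} (hθ : |θ| ≤ π) :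
    2 / π * |θ| ≤ ‖exp (θ * I) - 1‖ := by
  have hsin := Real.mul_abs_le_abs_sin (x := θ / 2) (by rw [abs_div, abs_two]; linarith)
  rw [mul_comm (θ : ℂ), norm_exp_I_mul_ofReal_sub_one, norm_mul, norm_two, Real.norm_eq_abs]
  rw [abs_div, abs_two] at hsin
  linarith

lemma two_div_pi_mul_abs_le_norm_circleMap_sub_one {r θ : ℝ} (hr : 1 ≤ r) (hθ : |θ| ≤ π) :
    2 / π * |θ| ≤ ‖circleMap 0 r θ - 1‖ :=
  (two_div_pi_mul_abs_le_norm_exp_mul_I_sub_one hθ).trans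
    (norm_exp_mul_I_sub_one_le_norm_circleMap_sub_one hr θ)

end Complex

lemma intervalIntegrable_abs_rpow {p : ℝ} (hp : -1 < p) (a b : ℝ) :
    IntervalIntegrable (fun x => |x| ^ p) volume a b := by
  have hpos : ∀ d, 0 ≤ d → IntervalIntegrable (fun x => |x| ^ p) volume 0 d := fun d hd =>
    (intervalIntegral.intervalIntegrable_rpow' hp).congr fun x hx => by
      rw [uIoc_of_le hd] at hx
      simp only [abs_of_pos hx.1]
  have hzero : ∀ d, IntervalIntegrable (fun x => |x| ^ p) volume 0 d := fun d => by
    rcases le_total 0 d with hd | hd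
    · exact hpos d hd
    · simpa using
        (IntervalIntegrable.iff_comp_neg (by finiteness)).mp (hpos (-d) (neg_nonneg.2 hd))
  exact (hzero a).symm.trans (hzero b)

lemma integral_abs_rpow {p : ℝ} (hp : -1 < p) {a : ℝ} (ha : 0 ≤ a) :
    ∫ x in -a..a, |x| ^ p = 2 * a ^ (p + 1) / (p + 1) := by
  have hhalf : ∫ x in (0:ℝ)..a, |x| ^ p = a ^ (p + 1) / (p + 1) := by
    have h := integral_rpow (a := 0) (b := a) (Or.inl hp)
    rw [Real.zero_rpow (by linarith), sub_zero] at h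
    rw [← h]
    refine intervalIntegral.integral_congr fun x hx => ?_
    rw [uIcc_of_le ha] at hx
    simp only [abs_of_nonneg hx.1]
  have hneg : ∫ x in -a..0, |x| ^ p = ∫ x in (0:ℝ)..a, |x| ^ p := by
    simpa using (intervalIntegral.integral_comp_neg (a := 0) (b := a) (fun x => |x| ^ p)).symm
  rw [← intervalIntegral.integral_add_adjacent_intervals (intervalIntegrable_abs_rpow hp _ _)
    (intervalIntegrable_abs_rpow hp _ _), hneg, hhalf]
  ring

lemma integral_two_div_pi_mul_abs_rpow {p : ℝ} (hp : -1 < p) :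
    ∫ θ in -π..π, (2 / π * |θ|) ^ p = 2 ^ (p + 1) * π / (p + 1) := by
  have hπ := pi_pos
  simp_rw [mul_rpow (by positivity : (0:ℝ) ≤ 2 / π) (abs_nonneg _)]
  rw [intervalIntegral.integral_const_mul, integral_abs_rpow hp hπ.le,
    div_rpow zero_le_two hπ.le, rpow_add_one two_ne_zero, rpow_add_one hπ.ne']
  field_simp

lemma hasFPowerSeriesOnBall_of_hasSum_pow_smul {𝕜 E : Type*} [RCLike 𝕜] [NormedAddCommGroup E]
    [NormedSpace 𝕜 E] {c : ℕ → E} {f : 𝕜 → E} {R : ℝ} (hR : 0 < R)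
    (hf : ∀ z : 𝕜, ‖z‖ < R → HasSum (fun n => z ^ n • c n) (f z)) :
    HasFPowerSeriesOnBall f (fun n => ContinuousMultilinearMap.mkPiRing 𝕜 (Fin n) (c n)) 0
      (ENNReal.ofReal R) where
  r_le := by
    refine ENNReal.le_of_forall_nnreal_lt fun r hr => ?_
    rw [← ENNReal.ofReal_coe_nnreal, ENNReal.ofReal_lt_ofReal_iff hR] at hr
    have hsum := hf ((r : ℝ) : 𝕜) (by simpa using hr)
    refine FormalMultilinearSeries.le_radius_of_tendsto _ (l := 0) ?_
    simpa [norm_smul, mul_comm] using hsum.summable.tendsto_atTop_zero.norm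
  r_pos := ENNReal.ofReal_pos.2 hR
  hasSum {z} hz := by
    rw [Metric.mem_eball, edist_zero_right, ← ofReal_norm, ENNReal.ofReal_lt_ofReal_iff hR] at hz
    simpa using hf z hz

section

variable {E : Type*} [NormedAddCommGroup E]

lemma integral_norm_circleMap_le_of_norm_le_rpow {f : ℂ → E} {S p r : ℝ} (hS : 0 ≤ S)
    (hp : -1 < p) (hp0 : p ≤ 0) (hr : 1 ≤ r) (hf : ContinuousOn f (Metric.sphere 0 r))
    (hbound : ∀ z, ‖z‖ = r → z ≠ 1 → ‖f z‖ ≤ S * ‖z - 1‖ ^ p) :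
    ∫ θ in -π..π, ‖f (circleMap 0 r θ)‖ ≤ S * ∫ θ in -π..π, (2 / π * |θ|) ^ p := by
  have hπ := pi_pos
  have hnorm : ∀ θ, ‖circleMap 0 r θ‖ = r := fun θ => by
    rw [norm_circleMap_zero, abs_of_pos (by linarith)]
  have hfi : IntervalIntegrable (fun θ => ‖f (circleMap 0 r θ)‖) volume (-π) π :=
    (hf.comp_continuous (continuous_circleMap 0 r) fun θ => by simp [hnorm]).norm
      |>.intervalIntegrable _ _
  have hgi : IntervalIntegrable (fun θ => S * (2 / π * |θ|) ^ p) volume (-π) π :=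
    ((intervalIntegrable_abs_rpow hp _ _).const_mul (S * (2 / π) ^ p)).congr fun θ _ => by
      simp only [mul_rpow (by positivity : (0:ℝ) ≤ 2 / π) (abs_nonneg θ), mul_assoc]
  rw [← intervalIntegral.integral_const_mul]
  refine intervalIntegral.integral_mono_ae_restrict (by linarith) hfi hgi ?_
  filter_upwards [ae_restrict_of_ae (Measure.ae_ne volume 0), ae_restrict_mem measurableSet_Icc]
    with θ hθ0 hθ
  have hlow := Complex.two_div_pi_mul_abs_le_norm_circleMap_sub_one hr (abs_le.2 hθ)
  have hpos : 0 < 2 / π * |θ| := by positivity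
  have hz1 : circleMap 0 r θ ≠ 1 := fun h => by
    rw [h, sub_self, norm_zero] at hlow
    linarith
  calc ‖f (circleMap 0 r θ)‖ ≤ S * ‖circleMap 0 r θ - 1‖ ^ p := hbound _ (hnorm θ) hz1
    _ ≤ S * (2 / π * |θ|) ^ p :=
        mul_le_mul_of_nonneg_left (rpow_le_rpow_of_nonpos hpos hlow hp0) hS

variable [NormedSpace ℂ E] [CompleteSpace E]

lemma HasFPowerSeriesOnBall.norm_le_integral_norm_circleMap {f : ℂ → E}
    {p : FormalMultilinearSeries ℂ ℂ E} {c : ℂ} {R : ℝ≥0∞} (hf : HasFPowerSeriesOnBall f p c R)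
    {r : ℝ} (hr : 0 < r) (hrR : ENNReal.ofReal r < R) (n : ℕ) :
    ‖p n‖ ≤ ((2 * π)⁻¹ * ∫ θ in -π..π, ‖f (circleMap c r θ)‖) * r⁻¹ ^ n := by
  lift r to ℝ≥0 using hr.le
  rw [ENNReal.ofReal_coe_nnreal] at hrR
  have hd : DifferentiableOn ℂ f (Metric.closedBall c r) :=
    hf.differentiableOn.mono fun z hz => by
      rw [← Metric.closedEBall_coe] at hz
      exact (Metric.mem_closedEBall.1 hz).trans_lt hrR
  rw [hf.hasFPowerSeriesAt.eq_formalMultilinearSeries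
    (hd.hasFPowerSeriesOnBall (by exact_mod_cast hr)).hasFPowerSeriesAt]
  have hshift :
      ∫ θ in 0..2 * π, ‖f (circleMap c r θ)‖ = ∫ θ in -π..π, ‖f (circleMap c r θ)‖ := by
    simpa [show -π + 2 * π = π by ring] using
      ((periodic_circleMap c r).comp fun z => ‖f z‖).intervalIntegral_add_eq 0 (-π)
  simpa [hshift, abs_of_pos hr] using norm_cauchyPowerSeries_le f c r n

lemma HasFPowerSeriesOnBall.norm_le_of_norm_le_mul_norm_sub_one_rpow {f : ℂ → E}
    {p : FormalMultilinearSeries ℂ ℂ E} {R : ℝ≥0∞} (hf : HasFPowerSeriesOnBall f p 0 R)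
    {q S r : ℝ} (hq : 0 < q) (hq1 : q ≤ 1) (hS : 0 ≤ S) (hr : 1 ≤ r) (hrR : ENNReal.ofReal r < R)
    (hbound : ∀ z, ‖z‖ = r → z ≠ 1 → ‖f z‖ ≤ S * ‖z - 1‖ ^ (q - 1)) (n : ℕ) :
    ‖p n‖ ≤ 2 ^ (q - 1) / q * S * r⁻¹ ^ n := by
  have hsphere : Metric.sphere (0 : ℂ) r ⊆ Metric.eball 0 R := fun z hz => by
    rwa [Metric.mem_eball, edist_dist, Metric.mem_sphere.1 hz]
  calc ‖p n‖ ≤ ((2 * π)⁻¹ * ∫ θ in -π..π, ‖f (circleMap 0 r θ)‖) * r⁻¹ ^ n :=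
        hf.norm_le_integral_norm_circleMap (by linarith) hrR n
    _ ≤ ((2 * π)⁻¹ * (S * ∫ θ in -π..π, (2 / π * |θ|) ^ (q - 1))) * r⁻¹ ^ n := by
        gcongr
        exact integral_norm_circleMap_le_of_norm_le_rpow hS (by linarith) (by linarith) hr
          (hf.continuousOn.mono hsphere) hbound
    _ = 2 ^ (q - 1) / q * S * r⁻¹ ^ n := by
        rw [integral_two_div_pi_mul_abs_rpow (by linarith), sub_add_cancel,
          rpow_sub_one two_ne_zero]
        field_simp

end

/-- For every `q ∈ (0,1]` there exists `C = C(q) > 0` with the following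
property.  Let `X` be a complex Banach space, `a > 0`, `S ≥ 0`, and let `H` be analytic on the
disk `D = {|z| < e^a}` with values in `X`, given by a power series `H(z) = ∑ₙ Hₙ zⁿ` converging
on `D`.  If `‖H(z)‖ ≤ S |z-1|^{q-1}` for all `z ∈ D`, `z ≠ 1`, then `‖Hₙ‖ ≤ C S e^{-na}` for
all `n ≥ 0`. -/
theorem stmt_18 :
    ∀ q : ℝ, 0 < q → q ≤ 1 →
      ∃ C : ℝ, 0 < C ∧
        ∀ (X : Type u) [NormedAddCommGroup X] [NormedSpace ℂ X] [CompleteSpace X],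
          ∀ a S : ℝ, 0 < a → 0 ≤ S →
            ∀ (Hc : ℕ → X) (H : ℂ → X),
              (∀ z : ℂ, ‖z‖ < Real.exp a → HasSum (fun n : ℕ => z ^ n • Hc n) (H z)) →
              (∀ z : ℂ, ‖z‖ < Real.exp a → z ≠ 1 → ‖H z‖ ≤ S * ‖z - 1‖ ^ (q - 1)) →
              ∀ n : ℕ, ‖Hc n‖ ≤ C * S * Real.exp (-(n : ℝ) * a) := by
  intro q hq hq1
  refine ⟨2 ^ (q - 1) / q, by positivity, ?_⟩
  intro X _ _ _ a S ha hS Hc H hsum hbound n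
  have hps := hasFPowerSeriesOnBall_of_hasSum_pow_smul (exp_pos a) hsum
  have hcoeff : ∀ r ∈ Ioo 1 (exp a), ‖Hc n‖ ≤ 2 ^ (q - 1) / q * S * r⁻¹ ^ n := fun r hr => by
    simpa using hps.norm_le_of_norm_le_mul_norm_sub_one_rpow hq hq1 hS hr.1.le
      ((ENNReal.ofReal_lt_ofReal_iff (exp_pos a)).2 hr.2)
      (fun z hz hz1 => hbound z (hz ▸ hr.2) hz1) n
  have hlim : Tendsto (fun r : ℝ => 2 ^ (q - 1) / q * S * r⁻¹ ^ n) (𝓝[<] exp a)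
      (𝓝 (2 ^ (q - 1) / q * S * (exp a)⁻¹ ^ n)) :=
    (((continuousAt_inv₀ (exp_pos a).ne').pow n).const_mul _).tendsto.mono_left nhdsWithin_le_nhds
  have hexp : (exp a)⁻¹ ^ n = exp (-(n : ℝ) * a) := by
    rw [← exp_neg, ← exp_nat_mul, mul_neg, neg_mul]
  rw [← hexp]
  exact ge_of_tendsto hlim (eventually_of_mem (Ioo_mem_nhdsLT (one_lt_exp_iff.2 ha)) hcoeff)
end
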